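/- Let n ≥ 7 and let c be a function from the 3-element subsets of {1,...,n} to a set of colors. For any color λ, at least one of the following holds: (1) c⁻¹(λ) contains two disjoint sets; (2) |c⁻¹(λ)| ≤ 3n - 8; (3) there exists x ∈ {1,...,n} contained in every set of c⁻¹(λ). -/

import Mathlib

/-! An intersecting family `F` of triples with no common point either has a cover by two points
`x ≠ y` or it has none. In the first case, deleting `x` from the members through `x` but not `y`,
and `y` from those through `y` but not `x`, gives two nonempty cross-intersecting families of
edges on the remaining `m = n - 2` points; such families have at most `2m - 2` edges together
(a case analysis on whether they contain two disjoint edges), and at most `m` members contain both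
`x` and `y`. In the second case, fix `A ∈ F`: every other member meets `A` in `{a}` or in
`A \ {a}` for some `a ∈ A`, and for each `a` there are at most four such members, so
`|F| ≤ 13 ≤ 3n - 8`. This is the Hilton–Milner bound for triples. -/

open Finset

section Edges

variable {ι : Type*} [DecidableEq ι] {V e b a₁ a₂ : Finset ι} {A B : Finset (Finset ι)} {u p q : ι}

lemma eq_pair_of_mem_of_mem (he : #e = 2) (hp : p ∈ e) (hq : q ∈ e) (hpq : p ≠ q) :
    e = {p, q} :=
  (eq_of_subset_of_card_le (insert_subset hp (singleton_subset_iff.2 hq))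
    (by rw [he, card_pair hpq])).symm

lemma exists_eq_pair_of_mem (he : #e = 2) (hu : u ∈ e) : ∃ v, u ≠ v ∧ e = {u, v} := by
  obtain ⟨x, y, hxy, rfl⟩ := card_eq_two.1 he
  rcases mem_insert.1 hu with rfl | hu
  · exact ⟨y, hxy, rfl⟩
  · obtain rfl := mem_singleton.1 hu
    exact ⟨x, hxy.symm, pair_comm _ _⟩

lemma mem_or_eq_pair_of_not_disjoint (he : #e = 2) (hpq : p ≠ q)
    (hp : ¬Disjoint e {u, p}) (hq : ¬Disjoint e {u, q}) : u ∈ e ∨ e = {p, q} := by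
  by_cases hu : u ∈ e
  · exact Or.inl hu
  simp only [disjoint_insert_right, disjoint_singleton_right, hu, not_false_eq_true, true_and,
    not_not] at hp hq
  exact Or.inr (eq_pair_of_mem_of_mem he hp hq hpq)

lemma mem_triangle_of_not_disjoint (he : #e = 2) (hup : u ≠ p) (huq : u ≠ q) (hpq : p ≠ q)
    (h₁ : ¬Disjoint e {u, p}) (h₂ : ¬Disjoint e {u, q}) (h₃ : ¬Disjoint e {p, q}) :
    e ∈ ({{u, p}, {u, q}, {p, q}} : Finset (Finset ι)) := by
  rcases mem_or_eq_pair_of_not_disjoint he hpq h₁ h₂ with hu | rfl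
  · obtain ⟨v, -, rfl⟩ := exists_eq_pair_of_mem he hu
    simp only [disjoint_insert_left, disjoint_singleton_left, mem_insert, mem_singleton, hup,
      huq, or_self, not_false_eq_true, true_and, not_not] at h₃
    rcases h₃ with rfl | rfl <;> simp
  · simp

lemma card_le_card_erase_of_forall_mem (hA : A ⊆ V.powersetCard 2) (hu : ∀ e ∈ A, u ∈ e) :
    #A ≤ #(V.erase u) :=
  card_le_card_of_surjOn (fun v => {u, v}) fun e he => by
    obtain ⟨heV, he2⟩ := mem_powersetCard.1 (hA he)
    obtain ⟨v, huv, rfl⟩ := exists_eq_pair_of_mem he2 (hu e he)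
    exact ⟨v, mem_erase.2 ⟨huv.symm, heV (by simp)⟩, rfl⟩

lemma card_le_card_erase_add_one (hA : A ⊆ V.powersetCard 2)
    (h : ∀ e ∈ A, u ∈ e ∨ e = {p, q}) : #A ≤ #(V.erase u) + 1 := by
  rw [← card_filter_add_card_filter_not (u ∈ ·)]
  gcongr
  · exact card_le_card_erase_of_forall_mem ((filter_subset _ _).trans hA)
      fun e he => (mem_filter.1 he).2
  · refine card_le_one.2 fun e he f hf => ?_
    rw [mem_filter] at he hf
    rw [(h e he.1).resolve_left he.2, (h f hf.1).resolve_left hf.2]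

lemma card_add_three_le_of_forall_not_disjoint (hA : A ⊆ V.powersetCard 2)
    (hb : b ∈ V.powersetCard 2) (h : ∀ e ∈ A, ¬Disjoint e b) : #A + 3 ≤ 2 * #V := by
  obtain ⟨hbV, hb2⟩ := mem_powersetCard.1 hb
  obtain ⟨p, q, hpq, rfl⟩ := card_eq_two.1 hb2
  have hp : p ∈ V := hbV (by simp)
  have hq : q ∈ V.erase p := mem_erase.2 ⟨hpq.symm, hbV (by simp)⟩
  have hthrough : #{e ∈ A | p ∈ e} ≤ #(V.erase p) :=
    card_le_card_erase_of_forall_mem ((filter_subset _ _).trans hA) fun e he => (mem_filter.1 he).2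
  have havoid : #{e ∈ A | p ∉ e} ≤ #((V.erase p).erase q) := by
    refine card_le_card_erase_of_forall_mem (fun e he => ?_) fun e he => ?_
    · obtain ⟨he, hpe⟩ := mem_filter.1 he
      obtain ⟨heV, he2⟩ := mem_powersetCard.1 (hA he)
      exact mem_powersetCard.2 ⟨subset_erase.2 ⟨heV, hpe⟩, he2⟩
    · obtain ⟨he, hpe⟩ := mem_filter.1 he
      have := h e he
      simp only [disjoint_insert_right, disjoint_singleton_right, hpe, not_false_eq_true,
        true_and, not_not] at this
      exact this
  rw [card_erase_of_mem hq, card_erase_of_mem hp] at havoid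
  rw [card_erase_of_mem hp] at hthrough
  have := card_filter_add_card_filter_not (s := A) (p ∈ ·)
  have : 2 ≤ #V := hb2 ▸ card_le_card hbV
  omega

lemma card_le_four_of_forall_not_disjoint (ha₁ : #a₁ = 2) (ha₂ : #a₂ = 2)
    (hd : Disjoint a₁ a₂) (hB : ∀ e ∈ B, #e = 2)
    (h : ∀ e ∈ B, ¬Disjoint e a₁ ∧ ¬Disjoint e a₂) : #B ≤ 4 :=
  calc #B ≤ #(a₁ ×ˢ a₂) := card_le_card_of_surjOn (fun x => {x.1, x.2}) fun e he => by
        obtain ⟨x, hxe, hx⟩ := not_disjoint_iff.1 (h e he).1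
        obtain ⟨y, hye, hy⟩ := not_disjoint_iff.1 (h e he).2
        exact ⟨(x, y), mem_product.2 ⟨hx, hy⟩,
          (eq_pair_of_mem_of_mem (hB e he) hxe hye fun hxy =>
            disjoint_left.1 hd hx (hxy ▸ hy)).symm⟩
    _ = 4 := by rw [card_product, ha₁, ha₂]

lemma exists_cherry (hB : B ⊆ V.powersetCard 2) (hBi : (B : Set (Finset ι)).Intersecting)
    (h : 1 < #B) : ∃ u p q, u ≠ p ∧ u ≠ q ∧ p ≠ q ∧ {u, p} ∈ B ∧ {u, q} ∈ B := by
  obtain ⟨b₀, hb₀, b₁, hb₁, hne⟩ := one_lt_card.1 h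
  obtain ⟨u, hu₀, hu₁⟩ := not_disjoint_iff.1 (hBi hb₀ hb₁)
  obtain ⟨p, hup, rfl⟩ := exists_eq_pair_of_mem (mem_powersetCard.1 (hB hb₀)).2 hu₀
  obtain ⟨q, huq, rfl⟩ := exists_eq_pair_of_mem (mem_powersetCard.1 (hB hb₁)).2 hu₁
  exact ⟨u, p, q, hup, huq, by rintro rfl; exact hne rfl, hb₀, hb₁⟩

lemma card_add_card_add_two_le_of_intersecting (hV : 5 ≤ #V) (hA : A ⊆ V.powersetCard 2)
    (hB : B ⊆ V.powersetCard 2) (hBne : B.Nonempty) (hBi : (B : Set (Finset ι)).Intersecting)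
    (hAB : ∀ a ∈ A, ∀ b ∈ B, ¬Disjoint a b) : #A + #B + 2 ≤ 2 * #V := by
  obtain hB1 | hB1 := le_or_gt #B 1
  · obtain ⟨b, hb⟩ := hBne
    have := card_add_three_le_of_forall_not_disjoint hA (hB hb) fun a ha => hAB a ha b hb
    omega
  obtain ⟨u, p, q, hup, huq, hpq, hupB, huqB⟩ := exists_cherry hB hBi hB1
  have hV' : #(V.erase u) + 1 = #V :=
    card_erase_add_one ((mem_powersetCard.1 (hB hupB)).1 (mem_insert_self u {p}))
  have hA' (e) (he : e ∈ A) : u ∈ e ∨ e = {p, q} :=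
    mem_or_eq_pair_of_not_disjoint (mem_powersetCard.1 (hA he)).2 hpq (hAB e he _ hupB)
      (hAB e he _ huqB)
  have hB' (f) (hf : f ∈ B) : u ∈ f ∨ f = {p, q} :=
    mem_or_eq_pair_of_not_disjoint (mem_powersetCard.1 (hB hf)).2 hpq (hBi hf hupB) (hBi hf huqB)
  have htriangle {X : Finset (Finset ι)} (hX : X ⊆ V.powersetCard 2)
      (h : ∀ e ∈ X, ¬Disjoint e {u, p} ∧ ¬Disjoint e {u, q} ∧ ¬Disjoint e {p, q}) : #X ≤ 3 :=
    (card_le_card fun e he => mem_triangle_of_not_disjoint (mem_powersetCard.1 (hX he)).2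
      hup huq hpq (h e he).1 (h e he).2.1 (h e he).2.2).trans card_le_three
  by_cases hpqA : {p, q} ∈ A
  · have := htriangle hB fun f hf =>
      ⟨hBi hf hupB, hBi hf huqB, fun h => hAB _ hpqA f hf h.symm⟩
    have := card_le_card_erase_add_one hA hA'
    omega
  by_cases hpqB : {p, q} ∈ B
  · have := htriangle hA fun e he => ⟨hAB e he _ hupB, hAB e he _ huqB, hAB e he _ hpqB⟩
    have := card_le_card_erase_add_one hB hB'
    omega
  have := card_le_card_erase_of_forall_mem hA fun e he =>
    (hA' e he).resolve_right fun h => hpqA (h ▸ he)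
  have := card_le_card_erase_of_forall_mem hB fun f hf =>
    (hB' f hf).resolve_right fun h => hpqB (h ▸ hf)
  omega

theorem card_add_card_add_two_le_of_crossIntersecting (hV : 5 ≤ #V) (hA : A ⊆ V.powersetCard 2)
    (hB : B ⊆ V.powersetCard 2) (hAne : A.Nonempty) (hBne : B.Nonempty)
    (hAB : ∀ a ∈ A, ∀ b ∈ B, ¬Disjoint a b) : #A + #B + 2 ≤ 2 * #V := by
  have hBA : ∀ b ∈ B, ∀ a ∈ A, ¬Disjoint b a := fun b hb a ha h => hAB a ha b hb h.symm
  by_cases hAi : (A : Set (Finset ι)).Intersecting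
  · have := card_add_card_add_two_le_of_intersecting hV hB hA hAne hAi hBA
    omega
  by_cases hBi : (B : Set (Finset ι)).Intersecting
  · exact card_add_card_add_two_le_of_intersecting hV hA hB hBne hBi hAB
  obtain ⟨a₁, ha₁, a₂, ha₂, ha⟩ : ∃ a₁ ∈ A, ∃ a₂ ∈ A, Disjoint a₁ a₂ := by
    simpa [Set.Intersecting] using hAi
  obtain ⟨b₁, hb₁, b₂, hb₂, hb⟩ : ∃ b₁ ∈ B, ∃ b₂ ∈ B, Disjoint b₁ b₂ := by
    simpa [Set.Intersecting] using hBi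
  have hcard {X : Finset (Finset ι)} (hX : X ⊆ V.powersetCard 2) : ∀ e ∈ X, #e = 2 :=
    fun e he => (mem_powersetCard.1 (hX he)).2
  have := card_le_four_of_forall_not_disjoint (hcard hB b₁ hb₁) (hcard hB b₂ hb₂) hb (hcard hA)
    fun a ha => ⟨hAB a ha b₁ hb₁, hAB a ha b₂ hb₂⟩
  have := card_le_four_of_forall_not_disjoint (hcard hA a₁ ha₁) (hcard hA a₂ ha₂) ha (hcard hB)
    fun b hb => ⟨hBA b hb a₁ ha₁, hBA b hb a₂ ha₂⟩
  omega

end Edges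

section Triples

variable {ι : Type*} [DecidableEq ι] {F : Finset (Finset ι)} {A D M N : Finset ι} {a s t : ι}

lemma exists_eq_triple_of_not_disjoint (hD : #D = 3) (hs : s ∈ D) (ht : t ∈ D) (hst : s ≠ t)
    (hsM : s ∉ M) (htM : t ∉ M) (hDM : ¬Disjoint D M) : ∃ z ∈ M, D = {s, t, z} := by
  obtain ⟨z, hzD, hzM⟩ := not_disjoint_iff.1 hDM
  have hsz : s ≠ z := fun h => hsM (h ▸ hzM)
  have htz : t ≠ z := fun h => htM (h ▸ hzM)
  refine ⟨z, hzM, (eq_of_subset_of_card_le ?_ ?_).symm⟩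
  · simp [insert_subset_iff, hs, ht, hzD]
  · rw [hD, card_eq_three.2 ⟨s, t, z, hst, hsz, htz, rfl⟩]

lemma card_sdiff_le_two (hF3 : (F : Set (Finset ι)).Sized 3)
    (hFi : (F : Set (Finset ι)).Intersecting) (hM : M ∈ F) (hA : A ∈ F) : #(M \ A) ≤ 2 := by
  have := card_sdiff_add_card_inter M A
  have := (not_disjoint_iff_nonempty_inter.1 (hFi hM hA)).card_pos
  have := hF3 hM
  omega

lemma card_filter_mem_mem_le_two (hF3 : (F : Set (Finset ι)).Sized 3)
    (hFi : (F : Set (Finset ι)).Intersecting) (hA : A ∈ F) (hM : M ∈ F) (hst : s ≠ t)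
    (hsM : s ∉ M) (htM : t ∉ M) : #{D ∈ F | s ∈ D ∧ t ∈ D ∧ D ∩ A ⊆ {s, t}} ≤ 2 :=
  calc _ ≤ #(M \ A) := card_le_card_of_surjOn (fun z => {s, t, z}) fun D hD => by
        obtain ⟨hDF, hs, ht, hDA⟩ := mem_filter.1 hD
        obtain ⟨z, hzM, rfl⟩ :=
          exists_eq_triple_of_not_disjoint (hF3 hDF) hs ht hst hsM htM (hFi hDF hM)
        refine ⟨z, mem_sdiff.2 ⟨hzM, fun hzA => ?_⟩, rfl⟩
        have := hDA (mem_inter.2 ⟨by simp, hzA⟩)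
        rw [mem_insert, mem_singleton] at this
        rcases this with rfl | rfl <;> contradiction
    _ ≤ 2 := card_sdiff_le_two hF3 hFi hM hA

lemma card_filter_inter_eq_singleton_le (hF3 : (F : Set (Finset ι)).Sized 3)
    (hFi : (F : Set (Finset ι)).Intersecting) (hτ : ∀ x y, ∃ M ∈ F, x ∉ M ∧ y ∉ M) (hA : A ∈ F)
    (hN : N ∈ F) (haN : a ∉ N) : #{D ∈ F | D ∩ A = {a}} ≤ 2 * #(N \ A) :=
  calc #{D ∈ F | D ∩ A = {a}}
      ≤ #((N \ A).biUnion fun w => {D ∈ F | a ∈ D ∧ w ∈ D ∧ D ∩ A ⊆ {a, w}}) := by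
        refine card_le_card fun D hD => ?_
        obtain ⟨hDF, hDA⟩ := mem_filter.1 hD
        obtain ⟨w, hwD, hwN⟩ := not_disjoint_iff.1 (hFi hDF hN)
        have haD : a ∈ D := (mem_inter.1 (hDA ▸ mem_singleton_self a)).1
        refine mem_biUnion.2 ⟨w, mem_sdiff.2 ⟨hwN, fun hwA => ?_⟩, mem_filter.2 ⟨hDF, haD, hwD, ?_⟩⟩
        · have := hDA ▸ mem_inter.2 ⟨hwD, hwA⟩
          exact haN (mem_singleton.1 this ▸ hwN)
        · rw [hDA]; exact singleton_subset_iff.2 (mem_insert_self a {w})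
    _ ≤ ∑ w ∈ N \ A, #{D ∈ F | a ∈ D ∧ w ∈ D ∧ D ∩ A ⊆ {a, w}} := card_biUnion_le
    _ ≤ ∑ w ∈ N \ A, 2 := sum_le_sum fun w hw => by
        obtain ⟨M, hM, haM, hwM⟩ := hτ a w
        exact card_filter_mem_mem_le_two hF3 hFi hA hM
          (fun h => haN (h ▸ (mem_sdiff.1 hw).1)) haM hwM
    _ = 2 * #(N \ A) := by rw [sum_const, smul_eq_mul, mul_comm]

lemma card_filter_inter_eq_singleton_add_card_filter_inter_eq_erase_le
    (hF3 : (F : Set (Finset ι)).Sized 3) (hFi : (F : Set (Finset ι)).Intersecting)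
    (hτ : ∀ x y, ∃ M ∈ F, x ∉ M ∧ y ∉ M) (hA : A ∈ F) (ha : a ∈ A) :
    #{D ∈ F | D ∩ A = {a}} + #{D ∈ F | D ∩ A = A.erase a} ≤ 4 := by
  have hA₂ : #(A.erase a) = 2 := by rw [card_erase_of_mem ha, hF3 hA]
  rcases {D ∈ F | D ∩ A = A.erase a}.eq_empty_or_nonempty with h | ⟨D₀, hD₀⟩
  · obtain ⟨M, hM, haM, -⟩ := hτ a a
    have := card_filter_inter_eq_singleton_le hF3 hFi hτ hA hM haM
    have := card_sdiff_le_two hF3 hFi hM hA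
    rw [h, card_empty]
    omega
  -- `D₀` has one point outside `A`, and every member meeting `A` only in `a` passes through it.
  obtain ⟨hD₀F, hD₀A⟩ := mem_filter.1 hD₀
  have haD₀ : a ∉ D₀ := fun h => notMem_erase a A (hD₀A ▸ mem_inter.2 ⟨h, ha⟩)
  have hD₀A₁ : #(D₀ \ A) = 1 := by
    have := card_sdiff_add_card_inter D₀ A
    rw [hD₀A, hA₂, hF3 hD₀F] at this
    omega
  have hsingle := card_filter_inter_eq_singleton_le hF3 hFi hτ hA hD₀F haD₀
  obtain ⟨b, c, hbc, hbcA⟩ := card_eq_two.1 hA₂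
  obtain ⟨M, hM, hbM, hcM⟩ := hτ b c
  have hpair : #{D ∈ F | D ∩ A = A.erase a} ≤ 2 := by
    refine (card_le_card fun D hD => ?_).trans
      (card_filter_mem_mem_le_two hF3 hFi hA hM hbc hbM hcM)
    obtain ⟨hDF, hDA⟩ := mem_filter.1 hD
    rw [hbcA] at hDA
    have hb : b ∈ D ∩ A := hDA ▸ mem_insert_self b {c}
    have hc : c ∈ D ∩ A := hDA ▸ mem_insert_of_mem (mem_singleton_self c)
    exact mem_filter.2 ⟨hDF, (mem_inter.1 hb).1, (mem_inter.1 hc).1, hDA.le⟩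
  omega

lemma subset_insert_biUnion_filter_inter_eq (hF3 : (F : Set (Finset ι)).Sized 3)
    (hFi : (F : Set (Finset ι)).Intersecting) (hA : A ∈ F) :
    F ⊆ insert A (A.biUnion fun a => {D ∈ F | D ∩ A = {a}} ∪ {D ∈ F | D ∩ A = A.erase a}) := by
  intro D hD
  rw [mem_insert, mem_biUnion]
  have hpos : 0 < #(D ∩ A) := (not_disjoint_iff_nonempty_inter.1 (hFi hD hA)).card_pos
  have hle : #(D ∩ A) ≤ 3 := hF3 hA ▸ card_le_card inter_subset_right
  obtain h₁ | h₂ | h₃ : #(D ∩ A) = 1 ∨ #(D ∩ A) = 2 ∨ #(D ∩ A) = 3 := by omega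
  · obtain ⟨a, ha⟩ := card_eq_one.1 h₁
    exact Or.inr ⟨a, inter_subset_right (ha ▸ mem_singleton_self a),
      mem_union_left _ (mem_filter.2 ⟨hD, ha⟩)⟩
  · obtain ⟨a, haA, haD⟩ : ∃ a ∈ A, a ∉ D := not_subset.1 fun hAD => by
      rw [inter_eq_right.2 hAD, hF3 hA] at h₂
      omega
    have hsub : D ∩ A ⊆ A.erase a := fun x hx =>
      mem_erase.2 ⟨fun h => haD (h ▸ (mem_inter.1 hx).1), (mem_inter.1 hx).2⟩
    have heq := eq_of_subset_of_card_le hsub (by rw [card_erase_of_mem haA, hF3 hA, h₂])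
    exact Or.inr ⟨a, haA, mem_union_right _ (mem_filter.2 ⟨hD, heq⟩)⟩
  · have hAD : A ⊆ D := inter_eq_right.1 (eq_of_subset_of_card_le inter_subset_right
      (by rw [h₃, hF3 hA]))
    exact Or.inl (eq_of_subset_of_card_le hAD (by rw [hF3 hA, hF3 hD])).symm

theorem card_le_thirteen (hF3 : (F : Set (Finset ι)).Sized 3)
    (hFi : (F : Set (Finset ι)).Intersecting) (hτ : ∀ x y, ∃ M ∈ F, x ∉ M ∧ y ∉ M) : #F ≤ 13 := by
  obtain rfl | ⟨A, hA⟩ := F.eq_empty_or_nonempty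
  · simp
  calc #F
      ≤ #(insert A (A.biUnion fun a => {D ∈ F | D ∩ A = {a}} ∪ {D ∈ F | D ∩ A = A.erase a})) :=
        card_le_card (subset_insert_biUnion_filter_inter_eq hF3 hFi hA)
    _ ≤ ∑ a ∈ A, #({D ∈ F | D ∩ A = {a}} ∪ {D ∈ F | D ∩ A = A.erase a}) + 1 :=
        (card_insert_le _ _).trans (Nat.add_le_add_right card_biUnion_le 1)
    _ ≤ ∑ a ∈ A, 4 + 1 := by
        gcongr with a ha
        exact (card_union_le _ _).trans
          (card_filter_inter_eq_singleton_add_card_filter_inter_eq_erase_le hF3 hFi hτ hA ha)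
    _ = 13 := by rw [sum_const, hF3 hA, smul_eq_mul]

end Triples

section Cover

variable {ι : Type*} [DecidableEq ι] {U : Finset ι} {F 𝒜 : Finset (Finset ι)} {a x y : ι} {k : ℕ}

lemma memberSubfamily_subset_powersetCard (h : 𝒜 ⊆ U.powersetCard (k + 1)) :
    𝒜.memberSubfamily a ⊆ (U.erase a).powersetCard k := fun s hs => by
  obtain ⟨hs𝒜, has⟩ := mem_memberSubfamily.1 hs
  obtain ⟨hsU, hcard⟩ := mem_powersetCard.1 (h hs𝒜)
  rw [card_insert_of_notMem has] at hcard
  exact mem_powersetCard.2 ⟨subset_erase.2 ⟨(subset_insert a s).trans hsU, has⟩, by omega⟩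

lemma nonMemberSubfamily_subset_powersetCard (h : 𝒜 ⊆ U.powersetCard k) :
    𝒜.nonMemberSubfamily a ⊆ (U.erase a).powersetCard k := fun s hs => by
  obtain ⟨hs𝒜, has⟩ := mem_nonMemberSubfamily.1 hs
  obtain ⟨hsU, hcard⟩ := mem_powersetCard.1 (h hs𝒜)
  exact mem_powersetCard.2 ⟨subset_erase.2 ⟨hsU, has⟩, hcard⟩

theorem card_add_eight_le_of_cover (hU : 7 ≤ #U) (hFU : F ⊆ U.powersetCard 3)
    (hFi : (F : Set (Finset ι)).Intersecting) (hstar : ∀ z, ∃ D ∈ F, z ∉ D) (hx : x ∈ U)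
    (hy : y ∈ U) (hxy : x ≠ y) (hcover : ∀ D ∈ F, x ∈ D ∨ y ∈ D) : #F + 8 ≤ 3 * #U := by
  set V := (U.erase y).erase x
  have hV : #V + 2 = #U := by
    rw [card_erase_of_mem (mem_erase.2 ⟨hxy, hx⟩), card_erase_of_mem hy]
    have := card_le_card (insert_subset hx (singleton_subset_iff.2 hy))
    rw [card_pair hxy] at this
    omega
  set A := (F.nonMemberSubfamily y).memberSubfamily x
  set B := (F.memberSubfamily y).nonMemberSubfamily x
  have hA : A ⊆ V.powersetCard 2 :=
    memberSubfamily_subset_powersetCard (nonMemberSubfamily_subset_powersetCard hFU)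
  have hB : B ⊆ V.powersetCard 2 :=
    nonMemberSubfamily_subset_powersetCard (memberSubfamily_subset_powersetCard hFU)
  have hboth : #((F.memberSubfamily y).memberSubfamily x) ≤ #V := by
    simpa using card_le_card
      (memberSubfamily_subset_powersetCard (memberSubfamily_subset_powersetCard hFU))
  have hnone : (F.nonMemberSubfamily y).nonMemberSubfamily x = ∅ := by
    refine eq_empty_of_forall_notMem fun s hs => ?_
    simp only [mem_nonMemberSubfamily] at hs
    exact (hcover s hs.1.1).elim hs.2 hs.1.2
  have hAne : A.Nonempty := by
    obtain ⟨D, hD, hyD⟩ := hstar y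
    have hxD := (hcover D hD).resolve_right hyD
    exact ⟨D.erase x, by simp [A, insert_erase hxD, hD, hyD]⟩
  have hBne : B.Nonempty := by
    obtain ⟨D, hD, hxD⟩ := hstar x
    have hyD := (hcover D hD).resolve_left hxD
    exact ⟨D.erase y, by simp [B, insert_erase hyD, hD, hxD]⟩
  have hAB : ∀ a ∈ A, ∀ b ∈ B, ¬Disjoint a b := by
    intro a ha b hb hab
    simp only [A, B, mem_memberSubfamily, mem_nonMemberSubfamily] at ha hb
    refine hFi ha.1.1 hb.1.1 ?_
    simp [disjoint_insert_left, disjoint_insert_right, hab, ha.1.2, hb.2]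
  have hcross := card_add_card_add_two_le_of_crossIntersecting (by omega) hA hB hAne hBne hAB
  have hsplit : #F = #((F.memberSubfamily y).memberSubfamily x) + #B + #A := by
    rw [← card_memberSubfamily_add_card_nonMemberSubfamily y F,
      ← card_memberSubfamily_add_card_nonMemberSubfamily x (F.memberSubfamily y),
      ← card_memberSubfamily_add_card_nonMemberSubfamily x (F.nonMemberSubfamily y), hnone,
      card_empty, add_zero]
  omega

theorem hilton_milner_three (hU : 7 ≤ #U) (hFU : F ⊆ U.powersetCard 3)
    (hFi : (F : Set (Finset ι)).Intersecting) (hstar : ∀ z, ∃ D ∈ F, z ∉ D) :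
    #F + 8 ≤ 3 * #U := by
  by_cases hcover : ∃ x y, ∀ D ∈ F, x ∈ D ∨ y ∈ D
  · obtain ⟨x, y, hcover⟩ := hcover
    obtain ⟨D, hD, hyD⟩ := hstar y
    obtain ⟨E, hE, hxE⟩ := hstar x
    have hxD := (hcover D hD).resolve_right hyD
    have hyE := (hcover E hE).resolve_left hxE
    exact card_add_eight_le_of_cover hU hFU hFi hstar ((mem_powersetCard.1 (hFU hD)).1 hxD)
      ((mem_powersetCard.1 (hFU hE)).1 hyE) (fun h => hxE (h ▸ hyE)) hcover
  push Not at hcover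
  have := card_le_thirteen ((Set.sized_powersetCard U 3).mono (coe_subset.2 hFU)) hFi hcover
  omega

end Cover

open scoped Classical in
theorem color_class_k3_trichotomy {α : Type*} (n : ℕ) (hn : 7 ≤ n)
    (c : Finset ℕ → α) (lam : α) (F : Finset (Finset ℕ))
    (hF : F = (Finset.Icc 1 n).powerset.filter (fun A => A.card = 3 ∧ c A = lam)) :
    (∃ D ∈ F, ∃ E ∈ F, Disjoint D E) ∨
    F.card ≤ 3 * n - 8 ∨
    (∃ x ∈ Finset.Icc 1 n, ∀ A ∈ F, x ∈ A) := by
  by_contra! h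
  obtain ⟨hFi, hcard, hstar⟩ := h
  have hFU : F ⊆ (Icc 1 n).powersetCard 3 := fun A hA => by
    rw [hF, mem_filter, mem_powerset] at hA
    exact mem_powersetCard.2 ⟨hA.1, hA.2.1⟩
  obtain ⟨D₀, hD₀⟩ : F.Nonempty := card_pos.1 (by omega)
  have hstar' (z : ℕ) : ∃ D ∈ F, z ∉ D := by
    by_cases hz : z ∈ Icc 1 n
    · exact hstar z hz
    · exact ⟨D₀, hD₀, fun h => hz ((mem_powersetCard.1 (hFU hD₀)).1 h)⟩
  have := hilton_milner_three (by simpa using hn) hFU (fun D hD E hE => hFi D hD E hE) hstar'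
  rw [Nat.card_Icc] at this
  omega
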